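/- Let μ ∈ (1,2) be rational, given as an irreducible fraction μ = c/d with c, d positive integers, let n ≥ 2, and suppose f^i(1/2) ≠ 1/2 for every i = 1,…,n−1. Then there exists a positive integer l with l ≤ 8 ⌈log_μ d⌉ ⌈log_μ n⌉ such that |I_{2l}| ≤ n^{−3} · μ^l · |I_l|. -/

import Mathlib

open Set MeasureTheory

/-- The tent map `f(x) = μx` for `x ≤ 1/2` and `μ(1-x)` for `x ≥ 1/2`. -/
noncomputable def tentMap (μ : ℝ) (x : ℝ) : ℝ :=
  if x ≤ 1/2 then μ * x else μ * (1 - x)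

/-- `tentBit μ x k` is the `(k+1)`-st bit `b_{k+1}` of the tent code of `x`. -/
noncomputable def tentBit (μ x : ℝ) : ℕ → Bool
  | 0 => if 1/2 ≤ x then true else false
  | k + 1 =>
    if (tentMap μ)^[k+1] x < 1/2 then tentBit μ x k
    else if 1/2 < (tentMap μ)^[k+1] x then !(tentBit μ x k)
    else true

/-- The tent code `γ^n(x) = b_1 ⋯ b_n`. -/
noncomputable def tentCode (μ : ℝ) (n : ℕ) (x : ℝ) : List Bool :=
  (List.range n).map (tentBit μ x)

/-- The tent language `L_n = {γ^n(x) : x ∈ [0,1)}`. -/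
def tentLang (μ : ℝ) (n : ℕ) : Set (List Bool) :=
  {w | ∃ x ∈ Set.Ico (0:ℝ) 1, tentCode μ n x = w}

/-- The segment-type `T(w) = {f^n(x) : x ∈ [0,1), γ^n(x) = w}`. -/
def segType (μ : ℝ) (n : ℕ) (w : List Bool) : Set ℝ :=
  {y | ∃ x ∈ Set.Ico (0:ℝ) 1, tentCode μ n x = w ∧ (tentMap μ)^[n] x = y}

/-- The set of segment-types `𝒯_n = {T(w) : w ∈ L_n}`. -/
def typeSet (μ : ℝ) (n : ℕ) : Set (Set ℝ) :=
  {S | ∃ w ∈ tentLang μ n, segType μ n w = S}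

/-- `I_i = T(γ^i(1/2))`. -/
noncomputable def Iseg (μ : ℝ) (i : ℕ) : Set ℝ :=
  segType μ i (tentCode μ i (1/2))

/-- `Ī_i = T(c̄_i)` where `c̄_i` is the bitwise complement of `γ^i(1/2)`. -/
noncomputable def Isegbar (μ : ℝ) (i : ℕ) : Set ℝ :=
  segType μ i ((tentCode μ i (1/2)).map (fun b => !b))

/-- The length of the interval `T(w)` (zero if `T(w)` is empty). -/
noncomputable def segLen (μ : ℝ) (n : ℕ) (w : List Bool) : ℝ :=
  (MeasureTheory.volume (segType μ n w)).toReal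

/-!
Put `a = μ^m ≥ n` with `m = ⌈log_μ n⌉` and `D = ⌈log_μ d⌉`. If the inequality failed for
every admissible `l`, then along `l = 2^(j+1) m` we would get `|I_{2l}| > a^(2^(j+1) - 3) |I_l|`,
and after `J = ⌊log₂ D⌋ + 3` doublings `1 ≥ |I_{2^(J+1) m}| ≥ a^(2^(J+1) - 3J - 2) |I_{2m}|`.
On the other hand `I_i` is, up to its endpoints, an interval with endpoints in `(2dⁱ)⁻¹ℤ`:
`I_{i+1}` is the image under `f` of `I_i` cut at `1/2`, and on either side of `1/2` the map `f`
is affine with slope `±c/d`, so it sends `(2q)⁻¹ℤ` into `(2qd)⁻¹ℤ`. Since the inequality fails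
at `l = m`, `|I_{2m}| > 0`, hence `|I_{2m}| ≥ (2d^(2m))⁻¹ ≥ a^-(2D+1)`, which contradicts
`2^(J+1) > 2D + 3J + 3`.
-/

def IsLatticeInterval (N : ℕ) (S : Set ℝ) : Prop :=
  ∃ a b : ℤ, Ioo (a / N : ℝ) (b / N) ⊆ S ∧ S ⊆ Icc (a / N : ℝ) (b / N)

namespace IsLatticeInterval

variable {N : ℕ} {S T : Set ℝ}

theorem inter (hS : IsLatticeInterval N S) (hT : IsLatticeInterval N T) :
    IsLatticeInterval N (S ∩ T) := by
  obtain ⟨a, b, hSo, hSc⟩ := hS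
  obtain ⟨a', b', hTo, hTc⟩ := hT
  have hmax : ((max a a' : ℤ) : ℝ) / N = max ((a : ℝ) / N) (a' / N) := by
    rw [Int.cast_max, max_div_div_right (Nat.cast_nonneg N)]
  have hmin : ((min b b' : ℤ) : ℝ) / N = min ((b : ℝ) / N) (b' / N) := by
    rw [Int.cast_min, min_div_div_right (Nat.cast_nonneg N)]
  refine ⟨max a a', min b b', ?_, ?_⟩
  · rw [hmax, hmin, ← Ioo_inter_Ioo]
    exact inter_subset_inter hSo hTo
  · rw [hmax, hmin, ← Icc_inter_Icc]
    exact inter_subset_inter hSc hTc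

theorem image_one_sub (hN : 0 < N) (hS : IsLatticeInterval N S) :
    IsLatticeInterval N ((fun x => 1 - x) '' S) := by
  obtain ⟨a, b, hSo, hSc⟩ := hS
  have hflip (z : ℤ) : (1 : ℝ) - z / N = ((N - z : ℤ) : ℝ) / N := by
    push_cast
    field_simp
  refine ⟨N - b, N - a, ?_, ?_⟩
  · rw [← hflip, ← hflip, ← image_const_sub_Ioo]
    exact image_mono hSo
  · rw [← hflip, ← hflip, ← image_const_sub_Icc]
    exact image_mono hSc

theorem image_mul {c d : ℕ} (hcd : 0 < (c / d : ℝ)) (hS : IsLatticeInterval N S) :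
    IsLatticeInterval (d * N) ((fun x => (c / d : ℝ) * x) '' S) := by
  obtain ⟨a, b, hSo, hSc⟩ := hS
  have hscale (z : ℤ) : (c / d : ℝ) * (z / N) = ((c * z : ℤ) : ℝ) / ((d * N : ℕ) : ℝ) := by
    push_cast
    exact div_mul_div_comm _ _ _ _
  refine ⟨c * a, c * b, ?_, ?_⟩
  · rw [← hscale, ← hscale, ← image_mul_left_Ioo hcd]
    exact image_mono hSo
  · rw [← hscale, ← hscale, ← image_mul_left_Icc' hcd]
    exact image_mono hSc

theorem one_le_mul_toReal_volume (hN : 0 < N) (hS : IsLatticeInterval N S)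
    (hpos : 0 < (volume S).toReal) : 1 ≤ N * (volume S).toReal := by
  obtain ⟨a, b, hSo, hSc⟩ := hS
  have hvol : volume S = ENNReal.ofReal (b / N - a / N) := by
    refine le_antisymm ((measure_mono hSc).trans_eq Real.volume_Icc) ?_
    rw [← Real.volume_Ioo]
    exact measure_mono hSo
  have hN' : (0 : ℝ) < N := by exact_mod_cast hN
  rw [hvol, ENNReal.toReal_ofReal'] at hpos ⊢
  have hlen : 0 < (b / N - a / N : ℝ) := by
    by_contra! h
    rw [max_eq_right h] at hpos
    exact hpos.false
  have hab : a < b := by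
    rw [sub_pos, div_lt_div_iff_of_pos_right hN'] at hlen
    exact_mod_cast hlen
  have hone : (1 : ℝ) ≤ b - a := by exact_mod_cast (show 1 ≤ b - a by omega)
  rw [max_eq_left hlen.le, ← sub_div, mul_div_cancel₀ _ hN'.ne']
  exact hone

end IsLatticeInterval

section TentMap

variable {μ : ℝ}

theorem tentMap_of_le {x : ℝ} (hx : x ≤ 1 / 2) : tentMap μ x = μ * x := if_pos hx

theorem tentMap_of_ge {x : ℝ} (hx : 1 / 2 ≤ x) : tentMap μ x = μ * (1 - x) := by
  rcases hx.eq_or_lt with rfl | h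
  · rw [tentMap, if_pos le_rfl]
    norm_num
  · exact if_neg h.not_ge

theorem mapsTo_tentMap (hμ0 : 0 ≤ μ) (hμ2 : μ ≤ 2) :
    MapsTo (tentMap μ) (Icc 0 1) (Icc 0 1) := by
  rintro x ⟨hx0, hx1⟩
  rcases le_total x (1 / 2) with h | h
  · rw [tentMap_of_le h]
    constructor <;> nlinarith
  · rw [tentMap_of_ge h]
    constructor <;> nlinarith

theorem Iseg_subset_Icc (hμ0 : 0 ≤ μ) (hμ2 : μ ≤ 2) (i : ℕ) : Iseg μ i ⊆ Icc 0 1 := by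
  rintro _ ⟨x, hx, -, rfl⟩
  exact (mapsTo_tentMap hμ0 hμ2).iterate i (Ico_subset_Icc_self hx)

theorem toReal_volume_Iseg_le_one (hμ0 : 0 ≤ μ) (hμ2 : μ ≤ 2) (i : ℕ) :
    (volume (Iseg μ i)).toReal ≤ 1 := by
  have h := measure_mono (μ := volume) (Iseg_subset_Icc hμ0 hμ2 i)
  rw [Real.volume_Icc, sub_zero, ENNReal.ofReal_one] at h
  exact ENNReal.toReal_le_of_le_ofReal zero_le_one (by rwa [ENNReal.ofReal_one])

noncomputable def nextBit (β : Bool) (y : ℝ) : Bool :=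
  if y < 1 / 2 then β else if 1 / 2 < y then !β else true

theorem nextBit_of_lt {β : Bool} {y : ℝ} (hy : y < 1 / 2) : nextBit β y = β := if_pos hy

theorem nextBit_of_gt {β : Bool} {y : ℝ} (hy : 1 / 2 < y) : nextBit β y = !β := by
  rw [nextBit, if_neg hy.not_gt, if_pos hy]

theorem tentBit_zero (x : ℝ) : tentBit μ x 0 = nextBit false x := by
  rw [tentBit, nextBit]
  split_ifs <;> first | rfl | linarith

theorem tentBit_succ (x : ℝ) (k : ℕ) :
    tentBit μ x (k + 1) = nextBit (tentBit μ x k) ((tentMap μ)^[k + 1] x) := rfl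

theorem tentCode_succ_eq_iff {x y : ℝ} {k : ℕ} :
    tentCode μ (k + 1) x = tentCode μ (k + 1) y ↔
      tentCode μ k x = tentCode μ k y ∧ tentBit μ x k = tentBit μ y k := by
  simp [tentCode, List.range_succ]

theorem exists_tentBit_eq_nextBit (k : ℕ) :
    ∃ β, ∀ x, tentCode μ k x = tentCode μ k (1 / 2) →
      tentBit μ x k = nextBit β ((tentMap μ)^[k] x) := by
  cases k with
  | zero => exact ⟨false, fun x _ => tentBit_zero x⟩
  | succ j =>
    refine ⟨tentBit μ (1 / 2) j, fun x hx => ?_⟩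
    rw [tentBit_succ, (tentCode_succ_eq_iff.1 hx).2]

def bitFiber (β b : Bool) : Set ℝ := {y ∈ Icc 0 1 | nextBit β y = b}

theorem bitFiber_bracket (β b : Bool) :
    (Ioo 0 (1 / 2) ⊆ bitFiber β b ∧ bitFiber β b ⊆ Icc 0 (1 / 2)) ∨
      (Ioo (1 / 2) 1 ⊆ bitFiber β b ∧ bitFiber β b ⊆ Icc (1 / 2) 1) := by
  by_cases hb : b = β
  · refine Or.inl ⟨fun y hy => ⟨⟨hy.1.le, by linarith [hy.2]⟩, ?_⟩,
      fun y hy => ⟨hy.1.1, not_lt.1 fun h => ?_⟩⟩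
    · rw [nextBit_of_lt hy.2, hb]
    have := hy.2
    rw [nextBit_of_gt h, hb] at this
    exact Bool.not_ne_self β this
  · refine Or.inr ⟨fun y hy => ⟨⟨by linarith [hy.1], hy.2.le⟩, ?_⟩,
      fun y hy => ⟨not_lt.1 fun h => hb ?_, hy.1.2⟩⟩
    · rw [nextBit_of_gt hy.1, Bool.eq_not_iff.2 hb]
    · rw [← hy.2, nextBit_of_lt h]

theorem Iseg_zero : Iseg μ 0 = Ico 0 1 := by
  ext y
  simp [Iseg, segType, tentCode]

theorem exists_Iseg_succ_eq (hμ0 : 0 ≤ μ) (hμ2 : μ ≤ 2) (k : ℕ) :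
    ∃ β, Iseg μ (k + 1) = tentMap μ '' (Iseg μ k ∩ bitFiber β (tentBit μ (1 / 2) k)) := by
  obtain ⟨β, hβ⟩ := exists_tentBit_eq_nextBit (μ := μ) k
  refine ⟨β, Set.ext fun y => ⟨?_, ?_⟩⟩
  · rintro ⟨x, hx, hcode, rfl⟩
    obtain ⟨hcode, hbit⟩ := tentCode_succ_eq_iff.1 hcode
    have hmem : (tentMap μ)^[k] x ∈ Iseg μ k := ⟨x, hx, hcode, rfl⟩
    refine ⟨_, ⟨hmem, Iseg_subset_Icc hμ0 hμ2 k hmem, ?_⟩, ?_⟩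
    · rw [← hβ x hcode, hbit]
    · exact (Function.iterate_succ_apply' _ _ _).symm
  · rintro ⟨_, ⟨⟨x, hx, hcode, rfl⟩, -, hbit⟩, rfl⟩
    refine ⟨x, hx, tentCode_succ_eq_iff.2 ⟨hcode, ?_⟩, Function.iterate_succ_apply' _ _ _⟩
    rw [hβ x hcode, hbit]

theorem IsLatticeInterval.image_tentMap_inter_bitFiber {c d q : ℕ} (hμ : μ = c / d)
    (hμ0 : 0 < μ) (hq : 0 < q) {T : Set ℝ} (hT : IsLatticeInterval (2 * q) T) (β b : Bool) :
    IsLatticeInterval (d * (2 * q)) (tentMap μ '' (T ∩ bitFiber β b)) := by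
  have h0 : ((0 : ℤ) : ℝ) / ((2 * q : ℕ) : ℝ) = 0 := by simp
  have hhalf : ((q : ℤ) : ℝ) / ((2 * q : ℕ) : ℝ) = 1 / 2 := by
    push_cast
    field_simp
  have hone : ((2 * q : ℤ) : ℝ) / ((2 * q : ℕ) : ℝ) = 1 := by
    push_cast
    field_simp
  rcases bitFiber_bracket β b with ⟨hlo, hhi⟩ | ⟨hlo, hhi⟩
  · have hF : IsLatticeInterval (2 * q) (bitFiber β b) :=
      ⟨0, q, by rwa [h0, hhalf], by rwa [h0, hhalf]⟩
    have hf : EqOn (tentMap μ) (fun x => μ * x) (T ∩ bitFiber β b) :=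
      fun x hx => tentMap_of_le (hhi hx.2).2
    rw [hf.image_eq, hμ]
    exact (hT.inter hF).image_mul (hμ ▸ hμ0)
  · have hF : IsLatticeInterval (2 * q) (bitFiber β b) :=
      ⟨q, 2 * q, by rwa [hone, hhalf], by rwa [hone, hhalf]⟩
    have hf : EqOn (tentMap μ) ((fun x => μ * x) ∘ fun x => 1 - x) (T ∩ bitFiber β b) :=
      fun x hx => tentMap_of_ge (hhi hx.2).1
    rw [hf.image_eq, image_comp, hμ]
    exact ((hT.inter hF).image_one_sub (by positivity)).image_mul (hμ ▸ hμ0)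

theorem isLatticeInterval_Iseg {c d : ℕ} (hμ : μ = c / d) (hμ0 : 0 < μ) (hμ2 : μ ≤ 2)
    (hd : 0 < d) (i : ℕ) : IsLatticeInterval (2 * d ^ i) (Iseg μ i) := by
  induction i with
  | zero =>
    rw [Iseg_zero]
    exact ⟨0, 2, by norm_num [Ioo_subset_Ico_self], by norm_num [Ico_subset_Icc_self]⟩
  | succ k ih =>
    obtain ⟨β, hk⟩ := exists_Iseg_succ_eq hμ0.le hμ2 k
    rw [hk]
    convert ih.image_tentMap_inter_bitFiber hμ hμ0 (pow_pos hd k) β _ using 1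
    ring

theorem one_le_mul_toReal_volume_Iseg {c d : ℕ} (hμ : μ = c / d) (hμ0 : 0 < μ) (hμ2 : μ ≤ 2)
    (hd : 0 < d) {i : ℕ} {A : ℝ} (hA : 2 * (d : ℝ) ^ i ≤ A)
    (hpos : 0 < (volume (Iseg μ i)).toReal) : 1 ≤ A * (volume (Iseg μ i)).toReal := by
  have h := (isLatticeInterval_Iseg hμ hμ0 hμ2 hd i).one_le_mul_toReal_volume (by positivity) hpos
  push_cast at h
  exact h.trans (mul_le_mul_of_nonneg_right hA ENNReal.toReal_nonneg)

end TentMap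

theorem mul_pow_two_pow_le_of_step {a : ℝ} (ha : 0 ≤ a) {u : ℕ → ℝ} {J : ℕ}
    (hstep : ∀ j < J, a ^ 2 ^ (j + 1) * u j ≤ a ^ 3 * u (j + 1)) :
    ∀ j ≤ J, u 0 * a ^ 2 ^ (j + 1) ≤ u j * a ^ (3 * j + 2) := by
  intro j hj
  induction j with
  | zero => simp
  | succ j ih =>
    calc u 0 * a ^ 2 ^ (j + 1 + 1) = u 0 * a ^ 2 ^ (j + 1) * a ^ 2 ^ (j + 1) := by
          rw [mul_assoc, ← pow_add, pow_succ 2 (j + 1), mul_two]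
      _ ≤ u j * a ^ (3 * j + 2) * a ^ 2 ^ (j + 1) :=
          mul_le_mul_of_nonneg_right (ih (by omega)) (by positivity)
      _ = a ^ (3 * j + 2) * (a ^ 2 ^ (j + 1) * u j) := by ring
      _ ≤ a ^ (3 * j + 2) * (a ^ 3 * u (j + 1)) :=
          mul_le_mul_of_nonneg_left (hstep j (by omega)) (by positivity)
      _ = u (j + 1) * a ^ (3 * (j + 1) + 2) := by ring

theorem two_pow_le_of_doubling {a n : ℝ} (ha : 1 < a) (hn : 0 < n) (hna : n ≤ a)
    {u : ℕ → ℝ} (hu : ∀ j, 0 ≤ u j) {J E : ℕ}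
    (hstep : ∀ j < J, (n ^ 3)⁻¹ * a ^ 2 ^ (j + 1) * u j < u (j + 1))
    (h0 : 1 ≤ a ^ E * u 0) (hJ : u J ≤ 1) : 2 ^ (J + 1) ≤ E + 3 * J + 2 := by
  have hstep' (j : ℕ) (hj : j < J) : a ^ 2 ^ (j + 1) * u j ≤ a ^ 3 * u (j + 1) := by
    have h := hstep j hj
    rw [mul_assoc, inv_mul_lt_iff₀ (by positivity)] at h
    exact h.le.trans (by gcongr; exact hu _)
  have hchain := mul_pow_two_pow_le_of_step (by positivity) hstep' J le_rfl
  rw [← pow_le_pow_iff_right₀ ha]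
  calc a ^ 2 ^ (J + 1) ≤ a ^ E * u 0 * a ^ 2 ^ (J + 1) :=
        le_mul_of_one_le_left (by positivity) h0
    _ = a ^ E * (u 0 * a ^ 2 ^ (J + 1)) := by ring
    _ ≤ a ^ E * (u J * a ^ (3 * J + 2)) := by gcongr
    _ ≤ a ^ E * (1 * a ^ (3 * J + 2)) := by gcongr
    _ = a ^ (E + 3 * J + 2) := by ring

theorem exists_two_pow_between {D : ℕ} (hD : 1 ≤ D) :
    ∃ J, 2 ^ J ≤ 8 * D ∧ 2 * D + 1 + 3 * J + 2 < 2 ^ (J + 1) := by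
  set L := Nat.log 2 D
  have hlow : 2 ^ L ≤ D := Nat.pow_log_le_self 2 (by omega)
  have hhigh : D < 2 * 2 ^ L := by
    simpa [pow_succ, mul_comm] using Nat.lt_pow_succ_log_self one_lt_two D
  have hL : L < 2 ^ L := Nat.lt_two_pow_self
  have h3 : 2 ^ (L + 3) = 8 * 2 ^ L := by ring
  have h4 : 2 ^ (L + 3 + 1) = 16 * 2 ^ L := by ring
  exact ⟨L + 3, by omega, by omega⟩

theorem le_pow_ceil_logb {b x : ℝ} (hb : 1 < b) (hx : 0 < x) :
    x ≤ b ^ ⌈Real.logb b x⌉₊ := by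
  rw [← Real.rpow_natCast, ← Real.logb_le_iff_le_rpow hb hx]
  exact Nat.le_ceil _

theorem one_lt_of_one_lt_div_lt_two {c d : ℕ} (h1 : 1 < (c / d : ℝ)) (h2 : (c / d : ℝ) < 2) :
    1 < d := by
  by_contra! hd
  interval_cases d
  · norm_num at h1
  · rw [Nat.cast_one, div_one] at h1 h2
    have hc1 : 1 < c := by exact_mod_cast h1
    have hc2 : c < 2 := by exact_mod_cast h2
    omega

theorem exists_short_level_general (μ : ℝ) (hμ1 : 1 < μ) (hμ2 : μ < 2)
    (c d : ℕ) (hμ : μ = (c : ℝ) / d) (n : ℕ) (hn : 2 ≤ n) :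
    ∃ l : ℕ, 0 < l ∧ l ≤ 8 * ⌈Real.logb μ d⌉₊ * ⌈Real.logb μ n⌉₊ ∧
      (volume (Iseg μ (2*l))).toReal ≤
        ((n : ℝ) ^ 3)⁻¹ * μ ^ l * (volume (Iseg μ l)).toReal := by
  set D := ⌈Real.logb μ d⌉₊
  set m := ⌈Real.logb μ n⌉₊
  have hd : 1 < d := one_lt_of_one_lt_div_lt_two (hμ ▸ hμ1) (hμ ▸ hμ2)
  have hD : 1 ≤ D := Nat.ceil_pos.2 (Real.logb_pos hμ1 (by exact_mod_cast hd))
  have hm : 1 ≤ m := Nat.ceil_pos.2 (Real.logb_pos hμ1 (by exact_mod_cast hn))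
  obtain ⟨J, hJD, hJ⟩ := exists_two_pow_between hD
  by_contra! hfail
  set a := μ ^ m
  have hna : (n : ℝ) ≤ a := le_pow_ceil_logb hμ1 (by positivity)
  set u : ℕ → ℝ := fun j => (volume (Iseg μ (2 ^ (j + 1) * m))).toReal
  have hstep (j : ℕ) (hj : j < J) : ((n : ℝ) ^ 3)⁻¹ * a ^ 2 ^ (j + 1) * u j < u (j + 1) := by
    have hl := Nat.mul_le_mul_right m ((Nat.pow_le_pow_right two_pos hj).trans hJD)
    have h := hfail _ (by positivity) hl
    rwa [pow_mul', ← mul_assoc, ← pow_succ'] at h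
  have hu0 : 0 < u 0 := (hfail m (by omega) (by nlinarith)).trans_le' (by positivity)
  have hscale : 2 * (d : ℝ) ^ (2 * m) ≤ a ^ (2 * D + 1) := by
    have hda : (d : ℝ) ^ m ≤ a ^ D := by
      rw [← pow_mul, mul_comm, pow_mul]
      exact pow_le_pow_left₀ (by positivity) (le_pow_ceil_logb hμ1 (by positivity)) m
    calc 2 * (d : ℝ) ^ (2 * m) = 2 * ((d : ℝ) ^ m) ^ 2 := by ring
      _ ≤ a * (a ^ D) ^ 2 := by gcongr; exact (by exact_mod_cast hn : (2 : ℝ) ≤ n).trans hna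
      _ = a ^ (2 * D + 1) := by ring
  have h0 : 1 ≤ a ^ (2 * D + 1) * u 0 :=
    one_le_mul_toReal_volume_Iseg hμ (by positivity) hμ2.le (by omega) hscale hu0
  exact hJ.not_ge <| two_pow_le_of_doubling (one_lt_pow₀ hμ1 (by omega)) (by positivity) hna
    (fun _ => ENNReal.toReal_nonneg) hstep h0 (toReal_volume_Iseg_le_one (by positivity) hμ2.le _)

/-- existence of `l ≤ 8⌈log_μ d⌉⌈log_μ n⌉` with
`|I_{2l}| ≤ n^{-3} μ^l |I_l|`. -/
theorem exists_short_level (μ : ℝ) (hμ1 : 1 < μ) (hμ2 : μ < 2)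
    (c d : ℕ) (hc : 0 < c) (hd : 0 < d) (hcd : Nat.Coprime c d)
    (hμ : μ = (c : ℝ) / d) (n : ℕ) (hn : 2 ≤ n)
    (hcrit : ∀ i : ℕ, 1 ≤ i → i ≤ n - 1 → (tentMap μ)^[i] (1/2) ≠ 1/2) :
    ∃ l : ℕ, 0 < l ∧ l ≤ 8 * ⌈Real.logb μ d⌉₊ * ⌈Real.logb μ n⌉₊ ∧
      (volume (Iseg μ (2*l))).toReal ≤
        ((n : ℝ) ^ 3)⁻¹ * μ ^ l * (volume (Iseg μ l)).toReal :=
  exists_short_level_general μ hμ1 hμ2 c d hμ n hn
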